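/- arXiv:2012.00502 — 2 statements merged into one kernel-verified Lean document; each statement's English description precedes it below -/
import Mathlib

section
/- Let p ≡ 1 (mod 4) be a prime, n = (p-1)/2, χ_p a generator of the character group modulo p, and λ_k = Σ_{j=1}^{n} ((1+j^2)/p) χ_p^k(j^2) for 1 ≤ k ≤ n. Then the determinant S(1,p) = det[((i^2+j^2)/p)]_{1≤i,j≤n} equals ∏_{k=1}^{n} λ_k. -/
/-!
Write `s i = (i + 1)²`, `i < n`, for the nonzero squares mod `p` (each listed once) and `𝓛` for
the quadratic character. For a character `ψ`, the substitution `x ↦ (i + 1) x` and `𝓛 (s i) = 1`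
give `∑ⱼ 𝓛 (s i + s j) ψ (s j) = ψ (s i) ∑ⱼ 𝓛 (1 + s j) ψ (s j)`: the vector `(ψ (s i))ᵢ` is an
eigenvector of `[𝓛 (s i + s j)]`. Since `χ_p` has order `2n`, the characters `χ_p ^ k`,
`1 ≤ k ≤ n`, have pairwise distinct squares, i.e. distinct restrictions to the squares; by
orthogonality their eigenvectors are linearly independent, and the determinant is the product of
the eigenvalues.
-/

open Finset Matrix

theorem Matrix.det_eq_prod_of_mul_eq_mul_diagonal {n R : Type*} [Fintype n] [DecidableEq n]
    [CommRing R] [IsDomain R] {M V : Matrix n n R} {d : n → R}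
    (h : M * V = V * diagonal d) (hV : V.det ≠ 0) : M.det = ∏ i, d i := by
  apply mul_right_cancel₀ hV
  rw [← det_mul, h, det_mul, det_diagonal, mul_comm]

theorem injective_sq_pow_succ_of_orderOf_eq_two_mul {G : Type*} [Group G] {g : G} {n : ℕ}
    (h : orderOf g = 2 * n) : Function.Injective fun k : Fin n => (g ^ (k + 1 : ℕ)) ^ 2 := by
  intro k k' hk
  have hord : orderOf (g ^ 2) = n := by
    rw [orderOf_pow_of_dvd two_ne_zero (h ▸ dvd_mul_right 2 n), h]; omega
  have hsucc : ∀ m : ℕ, (g ^ (m + 1)) ^ 2 = g ^ 2 * (g ^ 2) ^ m := fun m => by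
    rw [← pow_mul, ← pow_mul, ← pow_add]; ring_nf
  have hpow : (g ^ 2) ^ (k : ℕ) = (g ^ 2) ^ (k' : ℕ) := by
    simpa only [hsucc, mul_right_inj] using hk
  exact Fin.ext (pow_injOn_Iio_orderOf (x := g ^ 2) (hord ▸ k.2) (hord ▸ k'.2) hpow)

@[to_additive]
theorem Fin.prod_univ_eq_prod_Icc {M : Type*} [CommMonoid M] (n : ℕ) (f : ℕ → M) :
    ∏ k : Fin n, f (k + 1) = ∏ k ∈ Icc 1 n, f k := by
  rw [Fin.prod_univ_eq_prod_range (fun k => f (k + 1)), range_eq_Ico, prod_Ico_add',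
    ← Ico_add_one_right_eq_Icc, zero_add]

theorem MulChar.orderOf_eq_card_units_of_forall_eq_pow {F : Type*} [Field F] [Fintype F]
    [DecidableEq F] {χ : MulChar F ℂ} (h : ∀ ψ : MulChar F ℂ, ∃ m : ℕ, ψ = χ ^ m) :
    orderOf χ = Fintype.card Fˣ := by
  refine Nat.dvd_antisymm (orderOf_dvd_of_pow_eq_one χ.pow_card_eq_one) ?_
  obtain ⟨ψ, hψ⟩ := MulChar.exists_mulChar_orderOf_eq_card_units F
    (Complex.isPrimitiveRoot_exp _ Fintype.card_pos.ne')
  obtain ⟨m, rfl⟩ := h ψ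
  exact hψ ▸ orderOf_pow_dvd m

theorem MulChar.sum_apply_sq_add_sq_mul {R R' : Type*} [CommRing R] [Fintype R] [CommRing R']
    (χ ψ : MulChar R R') (a : Rˣ) :
    ∑ x : R, χ (a ^ 2 + x ^ 2) * ψ (x ^ 2)
      = χ (a ^ 2) * ψ (a ^ 2) * ∑ x : R, χ (1 + x ^ 2) * ψ (x ^ 2) := by
  rw [← a.mulLeft_bijective.sum_comp, mul_sum]
  refine sum_congr rfl fun x _ => ?_
  rw [show (a : R) ^ 2 + (a * x) ^ 2 = a ^ 2 * (1 + x ^ 2) by ring, mul_pow, map_mul, map_mul]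
  ring

theorem ZMod.natCast_succ_ne_zero_of_lt_half {p : ℕ} [NeZero p] (j : Fin ((p - 1) / 2)) :
    ((j + 1 : ℕ) : ZMod p) ≠ 0 := by
  have := NeZero.pos p
  rw [Ne, ZMod.natCast_eq_zero_iff]
  exact Nat.not_dvd_of_pos_of_lt j.1.succ_pos (by omega)

theorem ZMod.sum_sq_eq_add_two_nsmul {p : ℕ} [NeZero p] (hp : Odd p) {M : Type*}
    [AddCommMonoid M] (G : ZMod p → M) :
    ∑ x : ZMod p, G (x ^ 2)
      = G 0 + 2 • ∑ j : Fin ((p - 1) / 2), G (((j + 1 : ℕ) : ZMod p) ^ 2) := by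
  set n := (p - 1) / 2
  have hpn : p = 2 * n + 1 := by obtain ⟨m, rfl⟩ := hp; omega
  -- `r` enumerates the representatives `0, ±1, …, ±n` of the residues mod `p`.
  let r : Option (Fin n ⊕ Fin n) → ℤ
    | none => 0
    | some (.inl j) => j + 1
    | some (.inr j) => -(j + 1)
  have hr : ∀ o, -(n : ℤ) ≤ r o ∧ r o ≤ n := by
    rintro (_ | j | j) <;> simp only [r] <;> omega
  have hbij : Function.Bijective fun o => (r o : ZMod p) := by
    refine (Fintype.bijective_iff_injective_and_card _).mpr ⟨fun o o' h => ?_, ?_⟩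
    · rw [ZMod.intCast_eq_intCast_iff_dvd_sub] at h
      have := hr o; have := hr o'
      have hdiff := Int.eq_zero_of_abs_lt_dvd h (abs_lt.mpr ⟨by omega, by omega⟩)
      rcases o with _ | j | j <;> rcases o' with _ | j' | j' <;> simp only [r] at hdiff ⊢ <;> grind
    · simp only [Fintype.card_option, Fintype.card_sum, Fintype.card_fin, ZMod.card]; omega
  rw [← hbij.sum_comp, Fintype.sum_option, Fintype.sum_sum_type, two_nsmul]
  simp only [r, Int.cast_zero, Int.cast_neg, neg_sq, zero_pow two_ne_zero]
  push_cast
  rfl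

theorem MulChar.apply_sq {R R' : Type*} [CommMonoid R] [CommMonoidWithZero R']
    (ψ : MulChar R R') (x : R) : ψ (x ^ 2) = (ψ ^ 2) x := by
  rw [map_pow, ψ.pow_apply' two_ne_zero]

section Prime

variable {p : ℕ} [Fact p.Prime] {R : Type*} [CommRing R]

local notation "𝓛" => MulChar.ringHomComp (quadraticChar (ZMod p)) (Int.castRingHom R)

theorem MulChar.sum_fin_apply_sq_of_sq_eq_one {ψ : MulChar (ZMod p) R} (hψ : ψ ^ 2 = 1) :
    ∑ j : Fin ((p - 1) / 2), ψ (((j + 1 : ℕ) : ZMod p) ^ 2) = ((p - 1) / 2 : ℕ) := by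
  have hone : ∀ j : Fin ((p - 1) / 2), ψ (((j + 1 : ℕ) : ZMod p) ^ 2) = 1 := fun j => by
    rw [ψ.apply_sq, hψ, MulChar.one_apply
      (isUnit_iff_ne_zero.mpr (ZMod.natCast_succ_ne_zero_of_lt_half j))]
  rw [sum_congr rfl fun j _ => hone j, sum_const, card_univ, Fintype.card_fin, nsmul_one]

variable [IsDomain R] [CharZero R]

theorem MulChar.sum_fin_apply_sq_of_sq_ne_one (hp : p ≠ 2) {ψ : MulChar (ZMod p) R}
    (hψ : ψ ^ 2 ≠ 1) : ∑ j : Fin ((p - 1) / 2), ψ (((j + 1 : ℕ) : ZMod p) ^ 2) = 0 := by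
  have := ZMod.sum_sq_eq_add_two_nsmul ((Fact.out : p.Prime).odd_of_ne_two hp) ψ
  simp only [ψ.apply_sq, MulChar.sum_eq_zero_of_ne_one hψ, MulChar.map_zero, zero_add] at this
  simp only [ψ.apply_sq]
  exact (smul_eq_zero.mp this.symm).resolve_left two_ne_zero

theorem sum_quadraticChar_sq_add_sq_mul (hp : p ≠ 2) (ψ : MulChar (ZMod p) R)
    (i : Fin ((p - 1) / 2)) :
    ∑ j : Fin ((p - 1) / 2),
        𝓛 (((i + 1 : ℕ) : ZMod p) ^ 2 + ((j + 1 : ℕ) : ZMod p) ^ 2) * ψ (((j + 1 : ℕ) : ZMod p) ^ 2)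
      = ψ (((i + 1 : ℕ) : ZMod p) ^ 2) * ∑ j : Fin ((p - 1) / 2),
          𝓛 (1 + ((j + 1 : ℕ) : ZMod p) ^ 2) * ψ (((j + 1 : ℕ) : ZMod p) ^ 2) := by
  have hi := ZMod.natCast_succ_ne_zero_of_lt_half i
  have hodd := (Fact.out : p.Prime).odd_of_ne_two hp
  have key := (𝓛).sum_apply_sq_add_sq_mul ψ (Units.mk0 _ hi)
  have hL : 𝓛 (((i + 1 : ℕ) : ZMod p) ^ 2) = 1 := by
    simp only [MulChar.ringHomComp_apply, quadraticChar_sq_one' hi, map_one]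
  rw [Units.val_mk0, hL, one_mul,
    ZMod.sum_sq_eq_add_two_nsmul hodd fun x => 𝓛 (((i + 1 : ℕ) : ZMod p) ^ 2 + x) * ψ x,
    ZMod.sum_sq_eq_add_two_nsmul hodd fun x => 𝓛 (1 + x) * ψ x] at key
  simp only [MulChar.map_zero, mul_zero, zero_add, mul_smul_comm] at key
  exact smul_right_injective R two_ne_zero key

theorem det_quadraticChar_sq_add_sq (hp : p ≠ 2) (ψ : Fin ((p - 1) / 2) → MulChar (ZMod p) R)
    (hψ : Function.Injective fun k => ψ k ^ 2) :
    (of fun i j : Fin ((p - 1) / 2) =>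
        𝓛 (((i + 1 : ℕ) : ZMod p) ^ 2 + ((j + 1 : ℕ) : ZMod p) ^ 2)).det
      = ∏ k, ∑ j : Fin ((p - 1) / 2),
          𝓛 (1 + ((j + 1 : ℕ) : ZMod p) ^ 2) * ψ k (((j + 1 : ℕ) : ZMod p) ^ 2) := by
  let V := of fun i k : Fin ((p - 1) / 2) => ψ k (((i + 1 : ℕ) : ZMod p) ^ 2)
  let W := of fun k j : Fin ((p - 1) / 2) => (ψ k)⁻¹ (((j + 1 : ℕ) : ZMod p) ^ 2)
  have hWV : W * V = (((p - 1) / 2 : ℕ) : R) • 1 := by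
    ext k k'
    simp only [W, V, mul_apply, of_apply, Matrix.smul_apply, ← MulChar.mul_apply]
    rcases eq_or_ne k k' with rfl | hkk
    · rw [inv_mul_cancel, MulChar.sum_fin_apply_sq_of_sq_eq_one (one_pow 2), one_apply_eq,
        smul_eq_mul, mul_one]
    · rw [MulChar.sum_fin_apply_sq_of_sq_ne_one hp, one_apply_ne hkk, smul_zero]
      rw [mul_pow, inv_pow, Ne, inv_mul_eq_one]
      exact fun h => hkk (hψ h)
  have hV : V.det ≠ 0 := by
    have hn : (p - 1) / 2 ≠ 0 := by have := (Fact.out : p.Prime).two_le; omega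
    have hdet := congrArg det hWV
    rw [det_mul, det_smul, det_one, mul_one, Fintype.card_fin] at hdet
    exact right_ne_zero_of_mul (hdet ▸ pow_ne_zero _ (Nat.cast_ne_zero.mpr hn))
  refine det_eq_prod_of_mul_eq_mul_diagonal ?_ hV
  ext i k
  rw [mul_diagonal, mul_apply]
  simp only [V, of_apply, sum_quadraticChar_sq_add_sq_mul hp]

end Prime

theorem stmt7 (p : ℕ) [Fact p.Prime] (hp4 : p % 4 = 1)
    (χp : MulChar (ZMod p) ℂ)
    (hgen : ∀ χ : MulChar (ZMod p) ℂ, ∃ m : ℕ, χ = χp ^ m) :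
    (Matrix.of fun i j : Fin ((p - 1) / 2) =>
        ((legendreSym p (((i : ℤ) + 1) ^ 2 + ((j : ℤ) + 1) ^ 2) : ℤ) : ℂ)).det =
    ∏ k ∈ Finset.Icc 1 ((p - 1) / 2),
      ∑ j ∈ Finset.Icc 1 ((p - 1) / 2),
        ((legendreSym p (1 + (j : ℤ) ^ 2) : ℤ) : ℂ) *
          (χp ^ k) (((j : ℕ) : ZMod p) ^ 2) := by
  have hp : p ≠ 2 := by rintro rfl; omega
  have hord : orderOf χp = 2 * ((p - 1) / 2) := by
    rw [MulChar.orderOf_eq_card_units_of_forall_eq_pow hgen, ZMod.card_units]; omega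
  simp only [← Fin.prod_univ_eq_prod_Icc, ← Fin.sum_univ_eq_sum_Icc]
  convert det_quadraticChar_sq_add_sq hp _ (injective_sq_pow_succ_of_orderOf_eq_two_mul hord)
    using 5 <;>
  · simp only [legendreSym, MulChar.ringHomComp_apply]
    push_cast
    rfl
end

section
/- Let p ≡ 1 (mod 4) be a prime, n = (p-1)/2, and d an integer with (d/p) = 1. Then S(d,p)/S(1,p) = ε(d) whenever S(1,p) ≠ 0, where ε(d) = 1 if d is a fourth power modulo p and ε(d) = -1 otherwise, and S(d,p) = det[((i^2+d·j^2)/p)]_{1≤i,j≤n}. -/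
/-!
The entries of `S(d,p)` depend on `i` and `j` only through `i²` and `j²`, and `k ↦ k²` is a
bijection from `{1, …, n}` onto the group `Q` of nonzero squares mod `p`. As `d ∈ Q`, the columns
of `S(d,p)` are those of `S(1,p)` permuted by the translation `x ↦ d x` of `Q`, so
`S(d,p) = sign (x ↦ d x) · S(1,p)`. The group `Q` is cyclic of even order `n`; a translation of
such a group is an even permutation exactly when it is a translation by a square, and `d` is a
square in `Q` exactly when it is a fourth power mod `p`.
-/

open Equiv Equiv.Perm

namespace Equiv.Perm

variable {G : Type*} [Group G]

theorem isCycle_toPerm_of_forall_mem_zpowers {g : G} (hg : ∀ x, x ∈ Subgroup.zpowers g)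
    (hg1 : g ≠ 1) : (MulAction.toPerm g : Perm G).IsCycle := by
  refine ⟨1, by simpa using hg1, fun y _ => ?_⟩
  obtain ⟨k, rfl⟩ := Subgroup.mem_zpowers_iff.mp (hg y)
  refine ⟨k, ?_⟩
  change (MulAction.toPermHom G G g ^ k) 1 = g ^ k
  rw [← map_zpow]
  simp

variable [Fintype G] [DecidableEq G]

theorem support_toPerm_of_ne_one {g : G} (hg1 : g ≠ 1) :
    (MulAction.toPerm g : Perm G).support = .univ := by
  ext x
  simpa using hg1

theorem sign_toPerm_of_forall_mem_zpowers (hG : Even (Fintype.card G)) {g : G}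
    (hg : ∀ x, x ∈ Subgroup.zpowers g) : sign (MulAction.toPerm g : Perm G) = -1 := by
  have hg1 : g ≠ 1 := by
    rintro rfl
    have : Fintype.card G = 1 := Fintype.card_eq_one_iff.mpr ⟨1, fun x => by simpa using hg x⟩
    simp [this] at hG
  rw [(isCycle_toPerm_of_forall_mem_zpowers hg hg1).sign, support_toPerm_of_ne_one hg1,
    Finset.card_univ, hG.neg_one_pow]

theorem sign_toPerm_eq_one_iff_isSquare [IsCyclic G] (hG : Even (Fintype.card G)) (g : G) :
    sign (MulAction.toPerm g : Perm G) = 1 ↔ IsSquare g := by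
  obtain ⟨h, hh⟩ := IsCyclic.exists_generator (α := G)
  let φ : G →* ℤˣ := sign.comp (MulAction.toPermHom G G)
  have hφh : φ h = -1 := sign_toPerm_of_forall_mem_zpowers hG hh
  change φ g = 1 ↔ _
  constructor
  · obtain ⟨k, rfl⟩ := Subgroup.mem_zpowers_iff.mp (hh g)
    rw [map_zpow, hφh]
    rcases Int.even_or_odd k with ⟨m, rfl⟩ | hk
    · exact fun _ => ⟨h ^ m, zpow_add h m m⟩
    · simp [hk.neg_one_zpow]
  · rintro ⟨r, rfl⟩
    rw [map_mul, Int.units_mul_self]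

end Equiv.Perm

theorem Units.exists_pow_eq_iff {K : Type*} [GroupWithZero K] {n : ℕ} (hn : n ≠ 0) (x : Kˣ) :
    (∃ y : Kˣ, y ^ n = x) ↔ ∃ y : K, y ^ n = x := by
  constructor
  · rintro ⟨y, rfl⟩
    exact ⟨y, by simp⟩
  · rintro ⟨y, hy⟩
    have hy0 : y ≠ 0 := by
      rintro rfl
      exact x.ne_zero (by simpa [zero_pow hn] using hy.symm)
    exact ⟨Units.mk0 y hy0, Units.ext (by simpa using hy)⟩

theorem Subgroup.isSquare_iff_exists_pow_four {G : Type*} [CommGroup G] (x : Subgroup.square G) :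
    IsSquare x ↔ ∃ y : G, y ^ 4 = x := by
  constructor
  · rintro ⟨⟨_, y, rfl⟩, rfl⟩
    exact ⟨y, show y ^ 4 = y * y * (y * y) by rw [← sq, ← sq, ← pow_mul]⟩
  · rintro ⟨y, hy⟩
    exact ⟨⟨y ^ 2, IsSquare.sq y⟩, Subtype.ext (show (x : G) = y ^ 2 * y ^ 2 by
      rw [← sq, ← pow_mul, hy])⟩

theorem Matrix.det_submatrix_equiv_comp_perm {m n R : Type*} [Fintype m] [DecidableEq m]
    [Fintype n] [DecidableEq n] [CommRing R] (M : Matrix n n R) (e : m ≃ n) (τ : Perm n) :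
    (M.submatrix e (τ ∘ e)).det = sign τ * (M.submatrix e e).det := by
  rw [det_submatrix_equiv_self, ← det_permute', ← det_submatrix_equiv_self e]
  rfl

namespace ZMod

theorem natCast_fin_succ_ne_zero {p : ℕ} (j : Fin ((p - 1) / 2)) :
    (((j : ℕ) + 1 : ℕ) : ZMod p) ≠ 0 := by
  rw [Ne, natCast_eq_zero_iff]
  exact Nat.not_dvd_of_pos_of_lt (Nat.succ_pos _) (by omega)

variable {p : ℕ} [Fact p.Prime]

theorem eq_of_natCast_sq_eq {a b : ℕ} (hab : a + b < p)
    (h : (a : ZMod p) ^ 2 = (b : ZMod p) ^ 2) : a = b := by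
  rcases sq_eq_sq_iff_eq_or_eq_neg.mp h with h | h
  · rwa [natCast_eq_natCast_iff', Nat.mod_eq_of_lt (by omega), Nat.mod_eq_of_lt (by omega)] at h
  · rw [eq_neg_iff_add_eq_zero, ← Nat.cast_add, natCast_eq_zero_iff] at h
    have := Nat.eq_zero_of_dvd_of_lt h hab
    omega

theorem exists_natCast_sq_eq (hp : p ≠ 2) {x : ZMod p} (hx : x ≠ 0) :
    ∃ k : ℕ, 0 < k ∧ k ≤ (p - 1) / 2 ∧ (k : ZMod p) ^ 2 = x ^ 2 := by
  have hodd : p / 2 = (p - 1) / 2 := by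
    have := (Fact.out : p.Prime).eq_one_or_self_of_dvd 2
    omega
  refine ⟨x.valMinAbs.natAbs, by simpa using hx, hodd ▸ natAbs_valMinAbs_le x, ?_⟩
  rw [natCast_natAbs_valMinAbs]
  split_ifs <;> simp

def squareUnitOfFin (j : Fin ((p - 1) / 2)) : Subgroup.square (ZMod p)ˣ :=
  ⟨Units.mk0 _ (natCast_fin_succ_ne_zero j) ^ 2, IsSquare.sq _⟩

@[simp]
theorem coe_squareUnitOfFin (j : Fin ((p - 1) / 2)) :
    ((squareUnitOfFin j : (ZMod p)ˣ) : ZMod p) = ((j : ℕ) + 1 : ℕ) ^ 2 := rfl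

theorem bijective_squareUnitOfFin (hp : p ≠ 2) :
    Function.Bijective (squareUnitOfFin (p := p)) := by
  constructor
  · intro i j hij
    have := congrArg (fun x : Subgroup.square (ZMod p)ˣ => ((x : (ZMod p)ˣ) : ZMod p)) hij
    simp only [coe_squareUnitOfFin] at this
    have := eq_of_natCast_sq_eq (by omega) this
    exact Fin.ext (by omega)
  · rintro ⟨_, u, rfl⟩
    obtain ⟨k, hk0, hkn, hk⟩ := exists_natCast_sq_eq hp u.ne_zero
    refine ⟨⟨k - 1, by omega⟩, Subtype.ext (Units.ext ?_)⟩
    simp [Nat.sub_add_cancel hk0, hk, sq]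

noncomputable def finEquivSquareUnits (hp : p ≠ 2) : Fin ((p - 1) / 2) ≃ Subgroup.square (ZMod p)ˣ :=
  .ofBijective _ (bijective_squareUnitOfFin hp)

end ZMod

theorem legendreSym.exists_square_unit_eq {p : ℕ} [Fact p.Prime] {d : ℤ}
    (hd : legendreSym p d = 1) :
    ∃ c : Subgroup.square (ZMod p)ˣ, ((c : (ZMod p)ˣ) : ZMod p) = d := by
  have hd0 : (d : ZMod p) ≠ 0 := by
    intro h
    rw [(legendreSym.eq_zero_iff p d).mpr h] at hd
    exact absurd hd (by decide)
  obtain ⟨r, hr⟩ := (legendreSym.eq_one_iff p hd0).mp hd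
  have hr0 : r ≠ 0 := by
    rintro rfl
    exact hd0 (by simpa using hr)
  exact ⟨⟨Units.mk0 r hr0 ^ 2, IsSquare.sq _⟩, by simp [hr, sq]⟩

/-- The matrix `S(d,p)`; row and column `i : Fin n` stand for the residue `i + 1`. -/
def legendreSqMatrix (p : ℕ) [Fact p.Prime] (d : ℤ) :
    Matrix (Fin ((p - 1) / 2)) (Fin ((p - 1) / 2)) ℤ :=
  Matrix.of fun i j => legendreSym p (((i : ℤ) + 1) ^ 2 + d * ((j : ℤ) + 1) ^ 2)

section

variable {p : ℕ} [Fact p.Prime]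

theorem legendreSqMatrix_one :
    legendreSqMatrix p 1 = Matrix.of fun i j : Fin ((p - 1) / 2) =>
      legendreSym p (((i : ℤ) + 1) ^ 2 + ((j : ℤ) + 1) ^ 2) := by
  simp [legendreSqMatrix]

open Classical in
theorem legendreSqMatrix_eq_submatrix (hp : p ≠ 2) {c : Subgroup.square (ZMod p)ˣ} {d : ℤ}
    (hc : ((c : (ZMod p)ˣ) : ZMod p) = d) :
    legendreSqMatrix p d =
      (Matrix.of fun x y : Subgroup.square (ZMod p)ˣ =>
        quadraticChar (ZMod p) ((x : (ZMod p)ˣ) + (y : (ZMod p)ˣ))).submatrix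
        (ZMod.finEquivSquareUnits hp) (MulAction.toPerm c ∘ ZMod.finEquivSquareUnits hp) := by
  ext i j
  simp [legendreSqMatrix, legendreSym, ZMod.finEquivSquareUnits, hc]

open Classical in
theorem det_legendreSqMatrix (hp : p ≠ 2) {c : Subgroup.square (ZMod p)ˣ} {d : ℤ}
    (hc : ((c : (ZMod p)ˣ) : ZMod p) = d) :
    (legendreSqMatrix p d).det =
      sign (MulAction.toPerm c : Perm (Subgroup.square (ZMod p)ˣ)) * (legendreSqMatrix p 1).det := by
  rw [legendreSqMatrix_eq_submatrix hp hc, legendreSqMatrix_eq_submatrix hp (c := 1) (by simp),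
    Matrix.det_submatrix_equiv_comp_perm, Matrix.det_submatrix_equiv_comp_perm]
  simp [MulAction.toPerm_one]

end

theorem stmt18 (p : ℕ) [Fact p.Prime] (hp4 : p % 4 = 1) (d : ℤ)
    (hd : legendreSym p d = 1)
    (hS : (Matrix.of fun i j : Fin ((p - 1) / 2) =>
        legendreSym p (((i : ℤ) + 1) ^ 2 + ((j : ℤ) + 1) ^ 2)).det ≠ 0) :
    (((Matrix.of fun i j : Fin ((p - 1) / 2) =>
        legendreSym p (((i : ℤ) + 1) ^ 2 + d * ((j : ℤ) + 1) ^ 2)).det : ℤ) : ℚ) /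
      (((Matrix.of fun i j : Fin ((p - 1) / 2) =>
        legendreSym p (((i : ℤ) + 1) ^ 2 + ((j : ℤ) + 1) ^ 2)).det : ℤ) : ℚ) =
    if ∃ y : ZMod p, y ^ 4 = (d : ZMod p) then 1 else -1 := by
  classical
  have hp2 : p ≠ 2 := by
    rintro rfl
    norm_num at hp4
  obtain ⟨c, hc⟩ := legendreSym.exists_square_unit_eq hd
  have hcard : Even (Fintype.card (Subgroup.square (ZMod p)ˣ)) := by
    rw [← Fintype.card_congr (ZMod.finEquivSquareUnits hp2), Fintype.card_fin]
    exact ⟨(p - 1) / 4, by omega⟩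
  have hfourth : IsSquare c ↔ ∃ y : ZMod p, y ^ 4 = d := by
    rw [Subgroup.isSquare_iff_exists_pow_four, Units.exists_pow_eq_iff four_ne_zero, hc]
  have hdet := det_legendreSqMatrix hp2 hc
  rw [legendreSqMatrix_one] at hdet
  change ((legendreSqMatrix p d).det : ℚ) / _ = _
  rw [hdet]
  simp only [← hfourth, ← sign_toPerm_eq_one_iff_isSquare hcard]
  rcases Int.units_eq_one_or (sign (MulAction.toPerm c : Perm (Subgroup.square (ZMod p)ˣ)))
    with h | h <;> simp [h, hS]
end
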